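/- Let L, M be block lower triangular matrices in ℝ^{Nd×Nd} (d×d blocks, N×N block structure). Then dist_AW(L, M) = 0 if and only if there exists a block diagonal matrix Q = diag(Q₁, …, Q_N) with each Q_t ∈ O(d) orthogonal such that M = LQ. -/

import Mathlib

open Matrix BigOperators Classical

/-- Squared Frobenius norm. -/
def frobSq {m n : Type*} [Fintype m] [Fintype n] (C : Matrix m n ℝ) : ℝ :=
  ∑ i, ∑ j, (C i j) ^ 2

/-- Frobenius norm. -/
noncomputable def frobNorm {m n : Type*} [Fintype m] [Fintype n]
    (C : Matrix m n ℝ) : ℝ :=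
  Real.sqrt (frobSq C)

/-- Square root of a positive semidefinite matrix (junk value `0` otherwise). -/
noncomputable def psdSqrt {n : Type*} [Fintype n] [DecidableEq n]
    (A : Matrix n n ℝ) : Matrix n n ℝ :=
  if h : A.PosSemidef then
    (h.1.eigenvectorUnitary : Matrix n n ℝ) * diagonal (Real.sqrt ∘ h.1.eigenvalues) *
      (star h.1.eigenvectorUnitary : Matrix n n ℝ)
  else 0

/-- Nuclear norm: `‖C‖₊ = tr((CᵀC)^{1/2})`, the sum of the singular values. -/
noncomputable def nuclearNorm {m n : Type*} [Fintype m] [Fintype n] [DecidableEq n]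
    (C : Matrix m n ℝ) : ℝ :=
  (psdSqrt (Cᵀ * C)).trace

/-- Squared Bures–Wasserstein distance:
`dist_BW²(A,B) = tr A + tr B − 2 tr((A^{1/2} B A^{1/2})^{1/2})`. -/
noncomputable def distBWsq {n : Type*} [Fintype n] [DecidableEq n]
    (A B : Matrix n n ℝ) : ℝ :=
  A.trace + B.trace - 2 * (psdSqrt (psdSqrt A * B * psdSqrt A)).trace

variable {N d : ℕ}

/-- `L` is block lower triangular: all `d×d` blocks `L_{s,t}` with `s < t` vanish. -/
def BlockLowerTri (L : Matrix (Fin N × Fin d) (Fin N × Fin d) ℝ) : Prop :=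
  ∀ s t : Fin N, s < t → ∀ i j : Fin d, L (s, i) (t, j) = 0

/-- The `t`-th `d×d` diagonal block of a matrix. -/
def diagBlock (A : Matrix (Fin N × Fin d) (Fin N × Fin d) ℝ) (t : Fin N) :
    Matrix (Fin d) (Fin d) ℝ :=
  fun i j => A (t, i) (t, j)

/-- The `t`-th column block `L_{·,t} ∈ ℝ^{Nd×d}` of `L`. -/
def colBlock (L : Matrix (Fin N × Fin d) (Fin N × Fin d) ℝ) (t : Fin N) :
    Matrix (Fin N × Fin d) (Fin d) ℝ :=
  fun p j => L p (t, j)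

/-- Block diagonal matrix built from `d×d` blocks `Q₁, …, Q_N`. -/
def blockDiag (Q : Fin N → Matrix (Fin d) (Fin d) ℝ) :
    Matrix (Fin N × Fin d) (Fin N × Fin d) ℝ :=
  fun p q => if p.1 = q.1 then Q q.1 p.2 q.2 else 0

/-- Squared adapted Wasserstein pseudo-distance between Cholesky factors:
`dist_AW²(L,M) = ‖L‖_F² + ‖M‖_F² − 2 ∑_t ‖(LᵀM)_{t,t}‖₊`. -/
noncomputable def distAWsq (L M : Matrix (Fin N × Fin d) (Fin N × Fin d) ℝ) : ℝ :=
  frobSq L + frobSq M - 2 * ∑ t : Fin N, nuclearNorm (diagBlock (Lᵀ * M) t)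

/-- Adapted Wasserstein pseudo-distance. -/
noncomputable def distAW (L M : Matrix (Fin N × Fin d) (Fin N × Fin d) ℝ) : ℝ :=
  Real.sqrt (distAWsq L M)

/-! For each column block `A = L_{·,t}`, `B = M_{·,t}`, the polar decomposition
`AᵀB = W (BᵀA AᵀB)^{1/2}` with `W` orthogonal gives
`‖B − A W‖_F² = ‖A‖_F² + ‖B‖_F² − 2‖AᵀB‖₊` (orthogonal Procrustes). Hence
`dist_AW(L,M)²` is a sum of squared Frobenius norms, and it vanishes exactly when every column
block of `M` is the corresponding column block of `L` times an orthogonal matrix. -/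

section Frobenius

variable {m n : Type*} [Fintype m] [Fintype n]

theorem frobSq_eq_trace (A : Matrix m n ℝ) : frobSq A = (Aᵀ * A).trace := by
  rw [frobSq, Matrix.trace, Finset.sum_comm]
  simp [Matrix.mul_apply, sq]

theorem frobSq_nonneg (A : Matrix m n ℝ) : 0 ≤ frobSq A := by
  unfold frobSq
  positivity

theorem frobSq_eq_zero_iff {A : Matrix m n ℝ} : frobSq A = 0 ↔ A = 0 := by
  simp [frobSq, Finset.sum_eq_zero_iff_of_nonneg, Finset.sum_nonneg, sq_nonneg,
    ← Matrix.ext_iff]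

theorem frobSq_mul_orthogonal [DecidableEq n] (A : Matrix m n ℝ) {Q : Matrix n n ℝ}
    (hQ : Qᵀ * Q = 1) : frobSq (A * Q) = frobSq A := by
  rw [frobSq_eq_trace, frobSq_eq_trace, transpose_mul, Matrix.mul_assoc, trace_mul_comm]
  simp only [Matrix.mul_assoc, mul_eq_one_comm.mp hQ, Matrix.mul_one]

end Frobenius

section PsdSqrt

open scoped MatrixOrder

variable {n : Type*} [Fintype n] [DecidableEq n] {A : Matrix n n ℝ}

theorem psdSqrt_eq_cfcSqrt (hA : A.PosSemidef) : psdSqrt A = CFC.sqrt A := by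
  rw [CFC.sqrt_eq_cfc, cfc_nnreal_eq_real _ A, hA.1.cfc_eq, psdSqrt, dif_pos hA]
  simp only [IsHermitian.cfc, Unitary.conjStarAlgAut_apply]
  congr 3
  funext i
  simp [Real.coe_sqrt, hA.eigenvalues_nonneg i]

theorem posSemidef_psdSqrt (hA : A.PosSemidef) : (psdSqrt A).PosSemidef :=
  psdSqrt_eq_cfcSqrt hA ▸ (CFC.sqrt_nonneg A).posSemidef

theorem psdSqrt_mul_self (hA : A.PosSemidef) : psdSqrt A * psdSqrt A = A := by
  rw [psdSqrt_eq_cfcSqrt hA]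
  exact CFC.sqrt_mul_sqrt_self A hA.nonneg

theorem transpose_psdSqrt (hA : A.PosSemidef) : (psdSqrt A)ᵀ = psdSqrt A := by
  rw [← conjTranspose_eq_transpose_of_trivial]
  exact (posSemidef_psdSqrt hA).1

theorem psdSqrt_eq_of_sq_eq {B : Matrix n n ℝ} (hA : A.PosSemidef) (hB : B.PosSemidef)
    (hBA : B ^ 2 = A) : psdSqrt A = B := by
  rw [psdSqrt_eq_cfcSqrt hA]
  exact CFC.sqrt_unique (by rw [← sq]; exact hBA) hB.nonneg

end PsdSqrt

theorem posSemidef_transpose_mul_self {m n : Type*} [Fintype m] [Fintype n] (A : Matrix m n ℝ) :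
    (Aᵀ * A).PosSemidef := by
  simpa [conjTranspose_eq_transpose_of_trivial] using posSemidef_conjTranspose_mul_self A

theorem exists_linearIsometryEquiv_apply_eq {𝕜 E V : Type*} [RCLike 𝕜] [AddCommGroup E]
    [Module 𝕜 E] [NormedAddCommGroup V] [InnerProductSpace 𝕜 V] [FiniteDimensional 𝕜 V]
    (f g : E →ₗ[𝕜] V) (h : ∀ x, ‖f x‖ = ‖g x‖) : ∃ W : V ≃ₗᵢ[𝕜] V, ∀ x, W (f x) = g x := by
  have hker : LinearMap.ker f ≤ LinearMap.ker g := fun x hx => by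
    simpa [← norm_eq_zero, h] using hx
  let L := (LinearMap.ker f).liftQ g hker ∘ₗ f.quotKerEquivRange.symm.toLinearMap
  have hL : ∀ x, L ⟨f x, LinearMap.mem_range_self f x⟩ = g x := fun x => by
    simp [L, LinearMap.quotKerEquivRange_symm_apply_image]
  let Li : LinearMap.range f →ₗᵢ[𝕜] V :=
    { toLinearMap := L
      norm_map' := by rintro ⟨_, x, rfl⟩; simp [hL, h] }
  exact ⟨Li.extend.toLinearIsometryEquiv rfl, fun x => (Li.extend_apply ⟨f x, _⟩).trans (hL x)⟩

theorem norm_toEuclideanLin_eq {m n : Type*} [Fintype m] [Fintype n] [DecidableEq n]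
    {A B : Matrix m n ℝ} (h : Aᵀ * A = Bᵀ * B) (x : EuclideanSpace ℝ n) :
    ‖toEuclideanLin A x‖ = ‖toEuclideanLin B x‖ := by
  have hnorm (C : Matrix m n ℝ) :
      ‖toEuclideanLin C x‖ ^ 2 = x.ofLp ⬝ᵥ ((Cᵀ * C) *ᵥ x.ofLp) := by
    rw [← real_inner_self_eq_norm_sq, EuclideanSpace.inner_eq_star_dotProduct, ← mulVec_mulVec,
      dotProduct_mulVec, vecMul_transpose]
    simp
  rw [← sq_eq_sq₀ (norm_nonneg _) (norm_nonneg _), hnorm, hnorm, h]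

/-- The isometry `A x ↦ B x` of `range A` extends to an isometry of the whole space. -/
theorem exists_orthogonal_eq_mul_of_transpose_mul_self_eq {m n : Type*} [Fintype m]
    [DecidableEq m] [Fintype n] [DecidableEq n] {A B : Matrix m n ℝ} (h : Aᵀ * A = Bᵀ * B) :
    ∃ W : Matrix m m ℝ, Wᵀ * W = 1 ∧ B = W * A := by
  obtain ⟨W, hW⟩ := exists_linearIsometryEquiv_apply_eq _ _ (norm_toEuclideanLin_eq h)
  let e := EuclideanSpace.basisFun m ℝ
  refine ⟨LinearMap.toMatrix e.toBasis e.toBasis W.toLinearEquiv, ?_, ?_⟩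
  · have hW := W.toMatrix_mem_unitaryGroup e e
    rwa [mem_unitaryGroup_iff', star_eq_conjTranspose,
      conjTranspose_eq_transpose_of_trivial] at hW
  · have hWm : toEuclideanLin (LinearMap.toMatrix e.toBasis e.toBasis W.toLinearEquiv) =
        W.toLinearEquiv :=
      toLin_toMatrix e.toBasis e.toBasis _
    apply toEuclideanLin.injective
    ext x : 1
    rw [toLpLin_mul 2 2 2, hWm]
    exact (hW x).symm

section NuclearNorm

variable {n : Type*} [Fintype n] [DecidableEq n]

theorem exists_orthogonal_eq_mul_psdSqrt (C : Matrix n n ℝ) :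
    ∃ W : Matrix n n ℝ, Wᵀ * W = 1 ∧ C = W * psdSqrt (Cᵀ * C) := by
  have hC := posSemidef_transpose_mul_self C
  apply exists_orthogonal_eq_mul_of_transpose_mul_self_eq
  rw [transpose_psdSqrt hC, psdSqrt_mul_self hC]

theorem nuclearNorm_mul_orthogonal_of_posSemidef {S Q : Matrix n n ℝ} (hS : S.PosSemidef)
    (hQ : Qᵀ * Q = 1) : nuclearNorm (S * Q) = S.trace := by
  have hQQ : Q * Qᵀ = 1 := mul_eq_one_comm.mp hQ
  have hconj : (Qᵀ * S * Q).PosSemidef := by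
    simpa [conjTranspose_eq_transpose_of_trivial] using hS.mul_mul_conjTranspose_same Qᵀ
  have hsq : (Qᵀ * S * Q) ^ 2 = (S * Q)ᵀ * (S * Q) := by
    rw [sq, transpose_mul, ← conjTranspose_eq_transpose_of_trivial S, hS.1]
    simp only [Matrix.mul_assoc]
    rw [← Matrix.mul_assoc Q Qᵀ, hQQ, Matrix.one_mul]
  rw [nuclearNorm, psdSqrt_eq_of_sq_eq (posSemidef_transpose_mul_self _) hconj hsq,
    trace_mul_comm, ← Matrix.mul_assoc, hQQ, Matrix.one_mul]

variable {m : Type*} [Fintype m]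

theorem exists_orthogonal_frobSq_sub_mul_eq (A B : Matrix m n ℝ) :
    ∃ R : Matrix n n ℝ, Rᵀ * R = 1 ∧
      frobSq (B - A * R) = frobSq A + frobSq B - 2 * nuclearNorm (Aᵀ * B) := by
  obtain ⟨W, hW, hpolar⟩ := exists_orthogonal_eq_mul_psdSqrt (Aᵀ * B)
  refine ⟨W, hW, ?_⟩
  have hcross : (Wᵀ * (Aᵀ * B)).trace = nuclearNorm (Aᵀ * B) := by
    rw [nuclearNorm, hpolar, ← Matrix.mul_assoc, hW, Matrix.one_mul, ← hpolar]
  have hcross_transpose : (Bᵀ * (A * W)).trace = nuclearNorm (Aᵀ * B) := by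
    rw [← hcross, ← trace_transpose]
    simp [Matrix.mul_assoc]
  rw [frobSq_eq_trace, transpose_sub, Matrix.sub_mul, Matrix.mul_sub, Matrix.mul_sub,
    trace_sub, trace_sub, trace_sub, hcross_transpose, ← frobSq_eq_trace, ← frobSq_eq_trace,
    frobSq_mul_orthogonal A hW, transpose_mul, Matrix.mul_assoc, hcross]
  ring

theorem frobSq_add_frobSq_sub_nuclearNorm_nonneg (A B : Matrix m n ℝ) :
    0 ≤ frobSq A + frobSq B - 2 * nuclearNorm (Aᵀ * B) := by
  obtain ⟨R, -, hR⟩ := exists_orthogonal_frobSq_sub_mul_eq A B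
  exact hR ▸ frobSq_nonneg _

theorem frobSq_add_frobSq_sub_nuclearNorm_eq_zero_iff {A B : Matrix m n ℝ} :
    frobSq A + frobSq B - 2 * nuclearNorm (Aᵀ * B) = 0 ↔
      ∃ R : Matrix n n ℝ, Rᵀ * R = 1 ∧ B = A * R := by
  constructor
  · intro h
    obtain ⟨R, hR, hgap⟩ := exists_orthogonal_frobSq_sub_mul_eq A B
    exact ⟨R, hR, sub_eq_zero.mp (frobSq_eq_zero_iff.mp (hgap.trans h))⟩
  · rintro ⟨R, hR, rfl⟩
    rw [← Matrix.mul_assoc, nuclearNorm_mul_orthogonal_of_posSemidef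
      (posSemidef_transpose_mul_self A) hR, frobSq_mul_orthogonal A hR, ← frobSq_eq_trace]
    ring

end NuclearNorm

section Blocks

variable (L M : Matrix (Fin N × Fin d) (Fin N × Fin d) ℝ)

theorem diagBlock_transpose_mul (t : Fin N) :
    diagBlock (Lᵀ * M) t = (colBlock L t)ᵀ * colBlock M t :=
  rfl

theorem frobSq_eq_sum_colBlock : frobSq L = ∑ t, frobSq (colBlock L t) := by
  simp only [frobSq, colBlock, Fintype.sum_prod_type (f := fun q => L _ q ^ 2)]
  exact Finset.sum_comm

theorem colBlock_mul_blockDiag (Q : Fin N → Matrix (Fin d) (Fin d) ℝ) (t : Fin N) :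
    colBlock (L * blockDiag Q) t = colBlock L t * Q t := by
  ext p j
  simp [colBlock, _root_.blockDiag, Matrix.mul_apply, Fintype.sum_prod_type]

theorem eq_mul_blockDiag_iff (Q : Fin N → Matrix (Fin d) (Fin d) ℝ) :
    M = L * blockDiag Q ↔ ∀ t, colBlock M t = colBlock L t * Q t := by
  simp only [← colBlock_mul_blockDiag]
  constructor
  · rintro rfl _
    rfl
  · intro h
    ext p ⟨t, j⟩
    exact congrFun (congrFun (h t) p) j

theorem distAWsq_eq_sum_colBlock : distAWsq L M = ∑ t, (frobSq (colBlock L t) +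
    frobSq (colBlock M t) - 2 * nuclearNorm ((colBlock L t)ᵀ * colBlock M t)) := by
  simp only [distAWsq, frobSq_eq_sum_colBlock L, frobSq_eq_sum_colBlock M,
    diagBlock_transpose_mul, Finset.sum_sub_distrib, Finset.sum_add_distrib, Finset.mul_sum]

end Blocks

theorem distAW_eq_zero_iff_general (N d : ℕ)
    (L M : Matrix (Fin N × Fin d) (Fin N × Fin d) ℝ) :
    distAW L M = 0 ↔
      ∃ Q : Fin N → Matrix (Fin d) (Fin d) ℝ,
        (∀ t, (Q t)ᵀ * Q t = 1) ∧ M = L * blockDiag Q := by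
  have hgap : ∀ t ∈ Finset.univ, 0 ≤ frobSq (colBlock L t) + frobSq (colBlock M t) -
      2 * nuclearNorm ((colBlock L t)ᵀ * colBlock M t) :=
    fun t _ => frobSq_add_frobSq_sub_nuclearNorm_nonneg _ _
  rw [distAW, Real.sqrt_eq_zero', distAWsq_eq_sum_colBlock, (Finset.sum_nonneg hgap).ge_iff_eq',
    Finset.sum_eq_zero_iff_of_nonneg hgap]
  simp only [Finset.mem_univ, forall_const, frobSq_add_frobSq_sub_nuclearNorm_eq_zero_iff,
    Classical.skolem, forall_and, eq_mul_blockDiag_iff]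

/-- Degeneracy of `dist_AW`: `dist_AW(L,M) = 0` iff `M = LQ` for some block
diagonal matrix `Q = diag(Q₁,…,Q_N)` with each `Q_t` orthogonal. -/
theorem distAW_eq_zero_iff (N d : ℕ)
    (L M : Matrix (Fin N × Fin d) (Fin N × Fin d) ℝ)
    (hL : BlockLowerTri L) (hM : BlockLowerTri M) :
    distAW L M = 0 ↔
      ∃ Q : Fin N → Matrix (Fin d) (Fin d) ℝ,
        (∀ t, (Q t)ᵀ * Q t = 1) ∧ M = L * blockDiag Q :=
  distAW_eq_zero_iff_general N d L M
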